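/- Cross-strategy marginal-cost lower bound (inequality (proof:SuffCond6) in the proof of Theorem 2): In the service-chain model, let (φ,t) be feasible for r with a marginal vector λ satisfying the sufficient-optimality condition, and let (φ†,t†) be any pair feasible for the same r, with total link flows F†_{ij} and workloads G†_i. Then Σ_{(i,j)∈E} D'_{ij}(F_{ij})·F†_{ij} + Σ_{i∈V} C'_i(G_i)·G†_i ≥ Σ_{i∈V} Σ_{a∈A} λ_i(a,0)·r_i(a), where F_{ij} and G_i are the flows and workloads of (φ,t). -/

import Mathlib

open scoped BigOperators
open Classical

/-- The service-chain network model: a finite directed graph, a finite set of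
applications, each with a chain length, a destination, packet sizes and computation
weights, together with nondecreasing convex continuously differentiable link and
computation cost functions (with their derivatives). -/
structure SCNet (V A : Type) [Fintype V] [DecidableEq V] [Fintype A] where
  /-- the edge relation -/
  E : V → V → Prop
  /-- chain length of each application -/
  K : A → ℕ
  /-- destination of each application -/
  dest : A → V
  /-- packet size of each stage -/
  L : A → ℕ → ℝ
  hL : ∀ a k, k ≤ K a → 0 < L a k
  /-- computation weights -/
  w : V → A → ℕ → ℝ
  hw : ∀ i a k, k ≤ K a → 0 < w i a k
  /-- link cost functions -/
  D : V → V → ℝ → ℝ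
  /-- derivative of the link cost functions -/
  D' : V → V → ℝ → ℝ
  /-- computation cost functions -/
  C : V → ℝ → ℝ
  /-- derivative of the computation cost functions -/
  C' : V → ℝ → ℝ
  hD_mono : ∀ i j, E i j → MonotoneOn (D i j) (Set.Ici 0)
  hD_conv : ∀ i j, E i j → ConvexOn ℝ (Set.Ici 0) (D i j)
  hD_deriv : ∀ i j, E i j → ∀ x ∈ Set.Ici (0 : ℝ),
    HasDerivWithinAt (D i j) (D' i j x) (Set.Ici 0) x
  hD'_cont : ∀ i j, E i j → ContinuousOn (D' i j) (Set.Ici 0)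
  hC_mono : ∀ i, MonotoneOn (C i) (Set.Ici 0)
  hC_conv : ∀ i, ConvexOn ℝ (Set.Ici 0) (C i)
  hC_deriv : ∀ i, ∀ x ∈ Set.Ici (0 : ℝ),
    HasDerivWithinAt (C i) (C' i x) (Set.Ici 0) x
  hC'_cont : ∀ i, ContinuousOn (C' i) (Set.Ici 0)

variable {V A : Type} [Fintype V] [DecidableEq V] [Fintype A]

/-- A forwarding strategy: `φ i (some j) a k` is the fraction of stage-(a,k) traffic
that node `i` forwards to node `j`; `φ i none a k` is the fraction forwarded to `i`'s CPU. -/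
structure IsStrategy (N : SCNet V A) (φ : V → Option V → A → ℕ → ℝ) : Prop where
  nonneg : ∀ i j a k, 0 ≤ φ i j a k
  le_one : ∀ i j a k, φ i j a k ≤ 1
  no_edge : ∀ i j a k, ¬ N.E i j → φ i (some j) a k = 0
  cpu_last : ∀ i a, φ i none a (N.K a) = 0
  sum_one : ∀ i a k, k ≤ N.K a → ¬(i = N.dest a ∧ k = N.K a) →
    φ i none a k + ∑ j, φ i (some j) a k = 1
  sum_dest : ∀ a,
    φ (N.dest a) none a (N.K a) + ∑ j, φ (N.dest a) (some j) a (N.K a) = 0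

/-- A traffic vector for input rates `r` and strategy `φ`. -/
structure IsTraffic (N : SCNet V A) (r : V → A → ℝ) (φ : V → Option V → A → ℕ → ℝ)
    (t : V → A → ℕ → ℝ) : Prop where
  nonneg : ∀ i a k, 0 ≤ t i a k
  base : ∀ i a, t i a 0 = r i a + ∑ j, t j a 0 * φ j (some i) a 0
  step : ∀ i a k, 1 ≤ k → k ≤ N.K a →
    t i a k = (∑ j, t j a k * φ j (some i) a k) + t i a (k - 1) * φ i none a (k - 1)

/-- A pair (strategy, traffic) feasible for the input rates `r`. -/
def Feasible (N : SCNet V A) (r : V → A → ℝ) (φ : V → Option V → A → ℕ → ℝ)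
    (t : V → A → ℕ → ℝ) : Prop :=
  IsStrategy N φ ∧ IsTraffic N r φ t

/-- Total flow (bit/sec) on link `(i,j)`. -/
noncomputable def linkFlow (N : SCNet V A) (φ : V → Option V → A → ℕ → ℝ)
    (t : V → A → ℕ → ℝ) (i j : V) : ℝ :=
  ∑ a, ∑ k ∈ Finset.range (N.K a + 1), N.L a k * (t i a k * φ i (some j) a k)

/-- Total computation workload at node `i`. -/
noncomputable def workload (N : SCNet V A) (φ : V → Option V → A → ℕ → ℝ)
    (t : V → A → ℕ → ℝ) (i : V) : ℝ :=
  ∑ a, ∑ k ∈ Finset.range (N.K a + 1), N.w i a k * (t i a k * φ i none a k)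

/-- The aggregated communication and computation cost `T(φ,t)`. -/
noncomputable def totalCost (N : SCNet V A) (φ : V → Option V → A → ℕ → ℝ)
    (t : V → A → ℕ → ℝ) : ℝ :=
  (∑ i, ∑ j, if N.E i j then N.D i j (linkFlow N φ t i j) else 0)
    + ∑ i, N.C i (workload N φ t i)

/-- A marginal-cost vector `λ` for the pair `(φ,t)`, i.e. a solution of the
recursion defining `∂T/∂t_i(a,k)`. -/
structure IsMarginal (N : SCNet V A) (φ : V → Option V → A → ℕ → ℝ)
    (t : V → A → ℕ → ℝ) (lam : V → A → ℕ → ℝ) : Prop where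
  last : ∀ i a, lam i a (N.K a) =
    ∑ j, φ i (some j) a (N.K a) *
      (N.L a (N.K a) * N.D' i j (linkFlow N φ t i j) + lam j a (N.K a))
  step : ∀ i a k, k < N.K a →
    lam i a k =
      (∑ j, φ i (some j) a k * (N.L a k * N.D' i j (linkFlow N φ t i j) + lam j a k))
        + φ i none a k * (N.w i a k * N.C' i (workload N φ t i) + lam i a (k + 1))

/-- `j` is an admissible forwarding direction at node `i` and stage `(a,k)`:
either a physical out-neighbor, or the CPU provided `k < K a`. -/
def Admissible (N : SCNet V A) (i : V) (a : A) (k : ℕ) : Option V → Prop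
  | some j => N.E i j
  | none => k < N.K a

/-- The modified marginals `δ_{ij}(a,k)`. -/
noncomputable def mdelta (N : SCNet V A) (φ : V → Option V → A → ℕ → ℝ)
    (t : V → A → ℕ → ℝ) (lam : V → A → ℕ → ℝ) (i : V) (a : A) (k : ℕ) :
    Option V → ℝ
  | some j => N.L a k * N.D' i j (linkFlow N φ t i j) + lam j a k
  | none => N.w i a k * N.C' i (workload N φ t i) + lam i a (k + 1)

/-- The sufficient-optimality condition: every direction used at node `i` for stage
`(a,k)` achieves the minimum modified marginal over all admissible directions. -/
def SuffCond (N : SCNet V A) (φ : V → Option V → A → ℕ → ℝ)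
    (t : V → A → ℕ → ℝ) (lam : V → A → ℕ → ℝ) : Prop :=
  ∀ i a k, k ≤ N.K a → ∀ j, Admissible N i a k j → 0 < φ i j a k →
    ∀ j', Admissible N i a k j' →
      mdelta N φ t lam i a k j ≤ mdelta N φ t lam i a k j'

/-!
The marginals `λ` act as potentials for the competing traffic `t†`. Pairing `λ` with the flow
conservation equations of `t†` and summing over the stages of a chain telescopes, because the
CPU output of stage `k` is the arrival of stage `k + 1` and `λ` vanishes at the final sink:
`Σ_i λ_i(a,0) r_i(a) = Σ_{k,i,x} t†_i φ†_{ix} (λ_i(a,k) - λ_x)`, where `λ_x` is the marginal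
downstream of direction `x`. As `λ_i(a,k)` is the `φ`-average of the `δ_{ix}(a,k)`, all of them
minimal where used, `λ_i(a,k) - λ_x ≤ δ_{ix}(a,k) - λ_x`, the link or CPU marginal cost; summed
against `t† φ†` these costs give exactly `Σ D'(F) F† + Σ C'(G) G†`.
-/

namespace IsStrategy

variable {N : SCNet V A} {φ : V → Option V → A → ℕ → ℝ}

theorem sum_eq_one (hφ : IsStrategy N φ) {i : V} {a : A} {k : ℕ} (hk : k ≤ N.K a)
    (hnd : ¬(i = N.dest a ∧ k = N.K a)) : ∑ x, φ i x a k = 1 := by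
  rw [Fintype.sum_option]
  exact hφ.sum_one i a k hk hnd

theorem eq_zero_at_dest (hφ : IsStrategy N φ) (a : A) (x : Option V) :
    φ (N.dest a) x a (N.K a) = 0 := by
  have hsum : ∑ y, φ (N.dest a) y a (N.K a) = 0 := by
    rw [Fintype.sum_option]
    exact hφ.sum_dest a
  exact (Finset.sum_eq_zero_iff_of_nonneg fun y _ => hφ.nonneg _ y _ _).mp hsum x
    (Finset.mem_univ x)

theorem not_dest_of_pos (hφ : IsStrategy N φ) {i : V} {x : Option V} {a : A} {k : ℕ}
    (hx : 0 < φ i x a k) : ¬(i = N.dest a ∧ k = N.K a) := by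
  rintro ⟨rfl, rfl⟩
  exact hx.ne' (hφ.eq_zero_at_dest a x)

theorem admissible_of_pos (hφ : IsStrategy N φ) {i : V} {x : Option V} {a : A} {k : ℕ}
    (hk : k ≤ N.K a) (hx : 0 < φ i x a k) : Admissible N i a k x := by
  cases x with
  | none =>
    refine hk.lt_of_ne ?_
    rintro rfl
    exact hx.ne' (hφ.cpu_last i a)
  | some j =>
    by_contra hE
    exact hx.ne' (hφ.no_edge i j a k hE)

end IsStrategy

/-- The node whose marginal enters `δ_{ix}(a,k)`: the neighbour `j` at the same stage for
`x = some j`, and `i` itself at the next stage for the CPU. -/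
def downstream (p : V → A → ℕ → ℝ) (i : V) (a : A) (k : ℕ) : Option V → ℝ
  | some j => p j a k
  | none => p i a (k + 1)

noncomputable def marginalCost (N : SCNet V A) (φ : V → Option V → A → ℕ → ℝ)
    (t : V → A → ℕ → ℝ) (i : V) (a : A) (k : ℕ) : Option V → ℝ
  | some j => N.L a k * N.D' i j (linkFlow N φ t i j)
  | none => N.w i a k * N.C' i (workload N φ t i)

theorem mdelta_eq_marginalCost_add_downstream (N : SCNet V A)
    (φ : V → Option V → A → ℕ → ℝ) (t lam : V → A → ℕ → ℝ) (i : V) (a : A) (k : ℕ)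
    (x : Option V) :
    mdelta N φ t lam i a k x = marginalCost N φ t i a k x + downstream lam i a k x := by
  cases x <;> rfl

section Marginal

variable {N : SCNet V A} {φ : V → Option V → A → ℕ → ℝ} {t lam : V → A → ℕ → ℝ}

theorem IsMarginal.eq_sum_mul_mdelta (hφ : IsStrategy N φ) (hlam : IsMarginal N φ t lam)
    {i : V} {a : A} {k : ℕ} (hk : k ≤ N.K a) :
    lam i a k = ∑ x, φ i x a k * mdelta N φ t lam i a k x := by
  rw [Fintype.sum_option]
  rcases hk.lt_or_eq with hlt | rfl
  · rw [hlam.step i a k hlt, add_comm]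
    rfl
  · rw [hlam.last i a, hφ.cpu_last i a, zero_mul, zero_add]
    rfl

theorem IsMarginal.dest_eq_zero (hφ : IsStrategy N φ) (hlam : IsMarginal N φ t lam)
    (a : A) : lam (N.dest a) a (N.K a) = 0 := by
  rw [hlam.eq_sum_mul_mdelta hφ le_rfl]
  exact Finset.sum_eq_zero fun x _ => by rw [hφ.eq_zero_at_dest a x, zero_mul]

theorem SuffCond.le_mdelta (hφ : IsStrategy N φ) (hlam : IsMarginal N φ t lam)
    (hsuff : SuffCond N φ t lam) {i : V} {a : A} {k : ℕ} (hk : k ≤ N.K a)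
    (hnd : ¬(i = N.dest a ∧ k = N.K a)) {j : Option V} (hj : Admissible N i a k j) :
    lam i a k ≤ mdelta N φ t lam i a k j := by
  calc lam i a k = ∑ x, φ i x a k * mdelta N φ t lam i a k x :=
        hlam.eq_sum_mul_mdelta hφ hk
    _ ≤ ∑ x, φ i x a k * mdelta N φ t lam i a k j := by
        refine Finset.sum_le_sum fun x _ => ?_
        rcases (hφ.nonneg i x a k).lt_or_eq with hpos | hzero
        · exact mul_le_mul_of_nonneg_left
            (hsuff i a k hk x (hφ.admissible_of_pos hk hpos) hpos j hj) hpos.le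
        · rw [← hzero, zero_mul, zero_mul]
    _ = mdelta N φ t lam i a k j := by rw [← Finset.sum_mul, hφ.sum_eq_one hk hnd, one_mul]

end Marginal

/-- Traffic entering node `i` at stage `(a,k)` from outside the network layer: the input
rate for `k = 0`, and the output of `i`'s CPU at stage `k - 1` otherwise. -/
def arrivals (r : V → A → ℝ) (φ : V → Option V → A → ℕ → ℝ) (t : V → A → ℕ → ℝ)
    (i : V) (a : A) : ℕ → ℝ
  | 0 => r i a
  | k + 1 => t i a k * φ i none a k

theorem IsTraffic.eq_inflow_add_arrivals {N : SCNet V A} {r : V → A → ℝ}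
    {φ : V → Option V → A → ℕ → ℝ} {t : V → A → ℕ → ℝ} (ht : IsTraffic N r φ t)
    {i : V} {a : A} {k : ℕ} (hk : k ≤ N.K a) :
    t i a k = ∑ j, t j a k * φ j (some i) a k + arrivals r φ t i a k := by
  cases k with
  | zero => rw [ht.base, add_comm]; rfl
  | succ k => exact ht.step i a (k + 1) (Nat.le_add_left 1 k) hk

section Telescoping

variable {N : SCNet V A} {r : V → A → ℝ} {φ : V → Option V → A → ℕ → ℝ}
  {t p : V → A → ℕ → ℝ} {a : A}

theorem IsStrategy.sum_flow_mul_potential_eq (hφ : IsStrategy N φ)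
    (hp : p (N.dest a) a (N.K a) = 0) {k : ℕ} (hk : k ≤ N.K a) :
    ∑ i, ∑ x, t i a k * φ i x a k * p i a k = ∑ i, p i a k * t i a k := by
  refine Finset.sum_congr rfl fun i _ => ?_
  by_cases hnd : i = N.dest a ∧ k = N.K a
  · obtain ⟨rfl, rfl⟩ := hnd
    simp only [hp, mul_zero, zero_mul, Finset.sum_const_zero]
  · rw [← Finset.sum_mul, ← Finset.mul_sum, hφ.sum_eq_one hk hnd, mul_one, mul_comm]

theorem IsTraffic.sum_flow_mul_downstream_eq (ht : IsTraffic N r φ t) {k : ℕ}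
    (hk : k ≤ N.K a) :
    ∑ i, ∑ x, t i a k * φ i x a k * downstream p i a k x
      = ∑ i, p i a k * (t i a k - arrivals r φ t i a k)
        + ∑ i, p i a (k + 1) * arrivals r φ t i a (k + 1) := by
  have hinflow : ∀ i, t i a k - arrivals r φ t i a k = ∑ j, t j a k * φ j (some i) a k :=
    fun i => sub_eq_of_eq_add (ht.eq_inflow_add_arrivals hk)
  simp only [Fintype.sum_option, downstream, Finset.sum_add_distrib, hinflow,
    Finset.mul_sum]
  rw [add_comm, Finset.sum_comm]
  congr 1
  · exact Finset.sum_congr rfl fun i _ => Finset.sum_congr rfl fun j _ => by ring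
  · exact Finset.sum_congr rfl fun i _ => by simp only [arrivals]; ring

theorem Feasible.sum_flow_mul_drop_eq (hfeas : Feasible N r φ t)
    (hp : p (N.dest a) a (N.K a) = 0) :
    ∑ k ∈ Finset.range (N.K a + 1), ∑ i, ∑ x,
        t i a k * φ i x a k * (p i a k - downstream p i a k x)
      = ∑ i, p i a 0 * r i a := by
  obtain ⟨hφ, ht⟩ := hfeas
  set E : ℕ → ℝ := fun k => ∑ i, p i a k * arrivals r φ t i a k
  have hstage : ∀ k ∈ Finset.range (N.K a + 1),
      ∑ i, ∑ x, t i a k * φ i x a k * (p i a k - downstream p i a k x) = E k - E (k + 1) := by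
    intro k hk
    have hk : k ≤ N.K a := Nat.lt_succ_iff.mp (Finset.mem_range.mp hk)
    simp only [mul_sub, Finset.sum_sub_distrib, hφ.sum_flow_mul_potential_eq hp hk,
      ht.sum_flow_mul_downstream_eq hk, E]
    ring
  have hlast : E (N.K a + 1) = 0 :=
    Finset.sum_eq_zero fun i _ => by simp only [arrivals, hφ.cpu_last, mul_zero]
  rw [Finset.sum_congr rfl hstage, Finset.sum_range_sub', hlast, sub_zero]
  rfl

end Telescoping

theorem sum_mul_linkFlow (N : SCNet V A) (φ : V → Option V → A → ℕ → ℝ)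
    (t : V → A → ℕ → ℝ) (α : V → V → ℝ) :
    ∑ i, ∑ j, α i j * linkFlow N φ t i j
      = ∑ a, ∑ k ∈ Finset.range (N.K a + 1), ∑ i, ∑ j,
          t i a k * φ i (some j) a k * (N.L a k * α i j) := by
  simp only [linkFlow, Finset.mul_sum]
  rw [Finset.sum_comm_cycle]
  refine Finset.sum_congr rfl fun a _ => ?_
  rw [Finset.sum_comm_cycle]
  exact Finset.sum_congr rfl fun k _ => Finset.sum_congr rfl fun i _ =>
    Finset.sum_congr rfl fun j _ => by ring

theorem sum_mul_workload (N : SCNet V A) (φ : V → Option V → A → ℕ → ℝ)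
    (t : V → A → ℕ → ℝ) (β : V → ℝ) :
    ∑ i, β i * workload N φ t i
      = ∑ a, ∑ k ∈ Finset.range (N.K a + 1), ∑ i,
          t i a k * φ i none a k * (N.w i a k * β i) := by
  simp only [workload, Finset.mul_sum]
  rw [Finset.sum_comm]
  refine Finset.sum_congr rfl fun a _ => ?_
  rw [Finset.sum_comm]
  exact Finset.sum_congr rfl fun k _ => Finset.sum_congr rfl fun i _ => by ring

theorem IsStrategy.linkFlow_eq_zero {N : SCNet V A} {φ : V → Option V → A → ℕ → ℝ}
    (hφ : IsStrategy N φ) (t : V → A → ℕ → ℝ) {i j : V} (hE : ¬N.E i j) :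
    linkFlow N φ t i j = 0 :=
  Finset.sum_eq_zero fun a _ => Finset.sum_eq_zero fun k _ => by
    rw [hφ.no_edge i j a k hE, mul_zero, mul_zero]

theorem IsStrategy.sum_flow_mul_marginalCost_eq {N : SCNet V A}
    {φ φ' : V → Option V → A → ℕ → ℝ} (hφ' : IsStrategy N φ') (t t' : V → A → ℕ → ℝ) :
    ∑ a, ∑ k ∈ Finset.range (N.K a + 1), ∑ i, ∑ x,
        t' i a k * φ' i x a k * marginalCost N φ t i a k x
      = (∑ i, ∑ j, if N.E i j then
          N.D' i j (linkFlow N φ t i j) * linkFlow N φ' t' i j else 0)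
        + ∑ i, N.C' i (workload N φ t i) * workload N φ' t' i := by
  have hedges : ∀ i j, (if N.E i j then
      N.D' i j (linkFlow N φ t i j) * linkFlow N φ' t' i j else 0)
        = N.D' i j (linkFlow N φ t i j) * linkFlow N φ' t' i j := fun i j => by
    split_ifs with hE
    · rfl
    · rw [hφ'.linkFlow_eq_zero t' hE, mul_zero]
  simp only [hedges, sum_mul_linkFlow, sum_mul_workload, ← Finset.sum_add_distrib,
    Fintype.sum_option]
  exact Finset.sum_congr rfl fun a _ => Finset.sum_congr rfl fun k _ =>
    Finset.sum_congr rfl fun i _ => add_comm _ _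

theorem SuffCond.flow_mul_drop_le {N : SCNet V A} {φ φ' : V → Option V → A → ℕ → ℝ}
    {t lam : V → A → ℕ → ℝ} (hφ : IsStrategy N φ) (hlam : IsMarginal N φ t lam)
    (hsuff : SuffCond N φ t lam) (hφ' : IsStrategy N φ') {i : V} {a : A} {k : ℕ}
    (hk : k ≤ N.K a) (x : Option V) {s : ℝ} (hs : 0 ≤ s) :
    s * φ' i x a k * (lam i a k - downstream lam i a k x)
      ≤ s * φ' i x a k * marginalCost N φ t i a k x := by
  rcases (hφ'.nonneg i x a k).lt_or_eq with hpos | hzero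
  · have hle := hsuff.le_mdelta hφ hlam hk (hφ'.not_dest_of_pos hpos)
      (hφ'.admissible_of_pos hk hpos)
    rw [mdelta_eq_marginalCost_add_downstream] at hle
    exact mul_le_mul_of_nonneg_left (by linarith) (mul_nonneg hs hpos.le)
  · rw [← hzero, mul_zero, zero_mul, zero_mul]

theorem cross_strategy_marginal_lower_bound_general
    (N : SCNet V A) (r : V → A → ℝ)
    (φ : V → Option V → A → ℕ → ℝ) (t : V → A → ℕ → ℝ) (lam : V → A → ℕ → ℝ)
    (hfeas : Feasible N r φ t) (hlam : IsMarginal N φ t lam)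
    (hsuff : SuffCond N φ t lam)
    (φ' : V → Option V → A → ℕ → ℝ) (t' : V → A → ℕ → ℝ)
    (hfeas' : Feasible N r φ' t') :
    ∑ i, ∑ a, lam i a 0 * r i a ≤
      (∑ i, ∑ j, if N.E i j then
          N.D' i j (linkFlow N φ t i j) * linkFlow N φ' t' i j else 0)
        + ∑ i, N.C' i (workload N φ t i) * workload N φ' t' i := by
  calc ∑ i, ∑ a, lam i a 0 * r i a
      = ∑ a, ∑ k ∈ Finset.range (N.K a + 1), ∑ i, ∑ x,
          t' i a k * φ' i x a k * (lam i a k - downstream lam i a k x) := by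
        rw [Finset.sum_comm]
        exact Finset.sum_congr rfl fun a _ =>
          (hfeas'.sum_flow_mul_drop_eq (hlam.dest_eq_zero hfeas.1 a)).symm
    _ ≤ ∑ a, ∑ k ∈ Finset.range (N.K a + 1), ∑ i, ∑ x,
          t' i a k * φ' i x a k * marginalCost N φ t i a k x := by
        refine Finset.sum_le_sum fun a _ => Finset.sum_le_sum fun k hk =>
          Finset.sum_le_sum fun i _ => Finset.sum_le_sum fun x _ => ?_
        exact hsuff.flow_mul_drop_le hfeas.1 hlam hfeas'.1
          (Nat.lt_succ_iff.mp (Finset.mem_range.mp hk)) x (hfeas'.2.nonneg i a k)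
    _ = _ := hfeas'.1.sum_flow_mul_marginalCost_eq t t'

/-- **Cross-strategy marginal-cost lower bound.** If `(φ,t)` is feasible for `r`
with a marginal vector `λ` satisfying the sufficient-optimality condition, then for
any other pair `(φ†,t†)` feasible for the same `r`, with flows `F†` and workloads
`G†`, one has
`Σ_{(i,j)∈E} D'_{ij}(F_{ij})·F†_{ij} + Σ_i C'_i(G_i)·G†_i ≥ Σ_i Σ_a λ_i(a,0)·r_i(a)`. -/
theorem cross_strategy_marginal_lower_bound
    (N : SCNet V A) (r : V → A → ℝ) (hr : ∀ i a, 0 ≤ r i a)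
    (φ : V → Option V → A → ℕ → ℝ) (t : V → A → ℕ → ℝ) (lam : V → A → ℕ → ℝ)
    (hfeas : Feasible N r φ t) (hlam : IsMarginal N φ t lam)
    (hsuff : SuffCond N φ t lam)
    (φ' : V → Option V → A → ℕ → ℝ) (t' : V → A → ℕ → ℝ)
    (hfeas' : Feasible N r φ' t') :
    ∑ i, ∑ a, lam i a 0 * r i a ≤
      (∑ i, ∑ j, if N.E i j then
          N.D' i j (linkFlow N φ t i j) * linkFlow N φ' t' i j else 0)
        + ∑ i, N.C' i (workload N φ t i) * workload N φ' t' i :=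
  cross_strategy_marginal_lower_bound_general N r φ t lam hfeas hlam hsuff φ' t' hfeas'
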